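/- arXiv:2501.04885 — 3 statements merged into one kernel-verified Lean document; each statement's English description precedes it below -/
import Mathlib

section
/- For every n ≥ 4, the Lebesgue volume of the polytope P_n(1) ⊂ ℝ^{n−3} equals E_{n−3}/(n−3)!, where E_{n−3} is the Euler number (the number of down-up alternating permutations of {1,…,n−3}). -/
open scoped Classical ENNReal

/-- A permutation of `{1,…,m}` (0-indexed on `Fin m`) is down-up alternating if
`τ(1) > τ(2) < τ(3) > ⋯`. -/
def DownUp {m : ℕ} (τ : Equiv.Perm (Fin m)) : Prop :=
  ∀ i : ℕ, ∀ h : i + 1 < m,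
    if Even i then τ ⟨i + 1, h⟩ < τ ⟨i, Nat.lt_of_succ_lt h⟩
    else τ ⟨i, Nat.lt_of_succ_lt h⟩ < τ ⟨i + 1, h⟩

/-- Up-down alternating: `τ(1) < τ(2) > τ(3) < ⋯`. -/
def UpDown {m : ℕ} (τ : Equiv.Perm (Fin m)) : Prop :=
  ∀ i : ℕ, ∀ h : i + 1 < m,
    if Even i then τ ⟨i, Nat.lt_of_succ_lt h⟩ < τ ⟨i + 1, h⟩
    else τ ⟨i + 1, h⟩ < τ ⟨i, Nat.lt_of_succ_lt h⟩

/-- The Euler number `E_m`: the number of down-up alternating permutations of `{1,…,m}`. -/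
noncomputable def eulerNumber (m : ℕ) : ℕ :=
  Nat.card {τ : Equiv.Perm (Fin m) // DownUp τ}

open MeasureTheory

/-- `P_n(1) ⊆ ℝ^{n-3}` (0-indexed coordinates `d_0,…,d_{n-4}`): points of `[0,1]^{n-3}`
with `d_j + d_{j+1} ≥ 1` for consecutive coordinates. -/
def Pn1 (n : ℕ) : Set (Fin (n - 3) → ℝ) :=
  {d | (∀ j, d j ∈ Set.Icc (0 : ℝ) 1) ∧
    ∀ j : ℕ, ∀ h : j + 1 < n - 3, 1 ≤ d ⟨j, Nat.lt_of_succ_lt h⟩ + d ⟨j + 1, h⟩}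

/-- The zig-zag order polytope `O_m ⊆ [0,1]^m` (0-indexed): `x_j ≥ x_{j+1}` for `j` even
(1-indexed odd) and `x_j ≤ x_{j+1}` for `j` odd (1-indexed even). -/
def Ozz (m : ℕ) : Set (Fin m → ℝ) :=
  {x | (∀ j, x j ∈ Set.Icc (0 : ℝ) 1) ∧
    ∀ j : ℕ, ∀ h : j + 1 < m,
      if Even j then x ⟨j + 1, h⟩ ≤ x ⟨j, Nat.lt_of_succ_lt h⟩
      else x ⟨j, Nat.lt_of_succ_lt h⟩ ≤ x ⟨j + 1, h⟩}

/-!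
Reflecting the odd-indexed coordinates, `d_j ↦ 1 - d_j`, is a volume-preserving involution of
the cube that turns the constraints `d_j + d_{j+1} ≥ 1` into the zig-zag inequalities
`x_0 ≥ x_1 ≤ x_2 ≥ ⋯`, so `P_n(1)` has the volume of the zig-zag order polytope `O_{n-3}`.
Up to a null set the cube `[0,1]^m` is the disjoint union of the `m!` simplices
`{x_{τ 0} < ⋯ < x_{τ (m-1)}}`, all congruent under permutation of coordinates and hence of
volume `1/m!`; such a simplex lies in `O_m` exactly when `τ⁻¹` is down-up alternating and
misses it otherwise.
-/

open Set Function

section OrderCell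

variable {α : Type*} [LinearOrder α] {m : ℕ}

def orderCell (τ : Equiv.Perm (Fin m)) : Set (Fin m → α) :=
  {x | StrictMono (x ∘ τ)}

lemma injective_of_mem_orderCell {τ : Equiv.Perm (Fin m)} {x : Fin m → α}
    (hx : x ∈ orderCell τ) : Injective x := by
  simpa using hx.injective.comp τ.symm.injective

lemma mem_orderCell_sort {x : Fin m → α} (hx : Injective x) : x ∈ orderCell (Tuple.sort x) :=
  (Tuple.monotone_sort x).strictMono_of_injective (hx.comp (Tuple.sort x).injective)

lemma iUnion_orderCell : ⋃ τ : Equiv.Perm (Fin m), orderCell τ = {x : Fin m → α | Injective x} :=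
  Subset.antisymm (iUnion_subset fun _ _ => injective_of_mem_orderCell)
    fun _ hx => mem_iUnion.2 ⟨_, mem_orderCell_sort hx⟩

lemma pairwise_disjoint_orderCell :
    Pairwise (Disjoint on (orderCell : Equiv.Perm (Fin m) → Set (Fin m → α))) := by
  refine fun σ τ hne => disjoint_left.2 fun x hσ hτ => hne ?_
  have hcomp : x ∘ σ = x ∘ τ := Tuple.unique_monotone hσ.monotone hτ.monotone
  exact Equiv.ext fun i => injective_of_mem_orderCell hσ (congrFun hcomp i)

lemma preimage_comp_orderCell (σ τ : Equiv.Perm (Fin m)) :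
    (fun x : Fin m → α => x ∘ σ) ⁻¹' orderCell τ = orderCell (σ * τ) :=
  rfl

lemma apply_le_apply_iff_of_mem_orderCell {τ : Equiv.Perm (Fin m)} {x : Fin m → α}
    (hx : x ∈ orderCell τ) (a b : Fin m) : x a ≤ x b ↔ τ⁻¹ a ≤ τ⁻¹ b := by
  simpa [Equiv.Perm.inv_def] using hx.le_iff_le (a := τ⁻¹ a) (b := τ⁻¹ b)

lemma zigzag_iff_downUp_inv {τ : Equiv.Perm (Fin m)} {x : Fin m → α}
    (hx : x ∈ orderCell τ) :
    (∀ j : ℕ, ∀ h : j + 1 < m, if Even j then x ⟨j + 1, h⟩ ≤ x ⟨j, Nat.lt_of_succ_lt h⟩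
      else x ⟨j, Nat.lt_of_succ_lt h⟩ ≤ x ⟨j + 1, h⟩) ↔ DownUp τ⁻¹ := by
  refine forall_congr' fun j => forall_congr' fun h => ?_
  have hne : τ⁻¹ ⟨j + 1, h⟩ ≠ τ⁻¹ ⟨j, Nat.lt_of_succ_lt h⟩ :=
    τ⁻¹.injective.ne (by simp [Fin.ext_iff])
  split_ifs <;> simp only [apply_le_apply_iff_of_mem_orderCell hx, hne.le_iff_lt, hne.symm.le_iff_lt]

end OrderCell

section Volume

variable {ι : Type*} [Fintype ι] {m : ℕ}

lemma volume_setOf_apply_eq_apply {i j : ι} (hij : i ≠ j) :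
    volume {x : ι → ℝ | x i = x j} = 0 := by
  let L : (ι → ℝ) →ₗ[ℝ] ℝ := (LinearMap.proj i : (ι → ℝ) →ₗ[ℝ] ℝ) - LinearMap.proj j
  have hker : {x : ι → ℝ | x i = x j} = LinearMap.ker L := by
    ext x
    simp [L, sub_eq_zero]
  rw [hker]
  refine Measure.addHaar_submodule _ _ fun htop => ?_
  have hsingle : Pi.single i (1 : ℝ) ∈ LinearMap.ker L := htop ▸ Submodule.mem_top
  simp [L, Pi.single_eq_of_ne (Ne.symm hij)] at hsingle

lemma volume_setOf_not_injective : volume {x : ι → ℝ | ¬ Injective x} = 0 := by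
  have hsub : {x : ι → ℝ | ¬ Injective x} ⊆ ⋃ (i) (j) (_ : i ≠ j), {x : ι → ℝ | x i = x j} := by
    intro x hx
    simp only [Injective, not_forall] at hx
    obtain ⟨i, j, hxij, hij⟩ := hx
    exact mem_iUnion₂.2 ⟨i, j, mem_iUnion.2 ⟨hij, hxij⟩⟩
  exact measure_mono_null hsub <| measure_iUnion_null fun i => measure_iUnion_null fun j =>
    measure_iUnion_null volume_setOf_apply_eq_apply

lemma measurableSet_orderCell (τ : Equiv.Perm (Fin m)) :
    MeasurableSet (orderCell τ : Set (Fin m → ℝ)) := by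
  simp only [orderCell, StrictMono, comp_apply, ofPred_forall]
  exact .iInter fun i => .iInter fun j => .iInter fun _ =>
    measurableSet_lt (measurable_pi_apply _) (measurable_pi_apply _)

lemma volume_eq_sum_inter_orderCell (s : Set (Fin m → ℝ)) :
    volume s = ∑ τ : Equiv.Perm (Fin m), volume (s ∩ orderCell τ) := by
  have hconull : volume {x : Fin m → ℝ | Injective x}ᶜ = 0 := volume_setOf_not_injective
  calc volume s = volume (s ∩ ⋃ τ, orderCell τ) := by
        rw [iUnion_orderCell, measure_inter_conull hconull]
    _ = volume.restrict (⋃ τ, orderCell τ) s :=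
        (Measure.restrict_apply' (.iUnion measurableSet_orderCell)).symm
    _ = ∑ τ, volume.restrict (orderCell τ) s := by
        rw [Measure.restrict_iUnion pairwise_disjoint_orderCell measurableSet_orderCell,
          Measure.sum_apply_of_countable, tsum_fintype]
    _ = ∑ τ, volume (s ∩ orderCell τ) := by
        simp only [Measure.restrict_apply' (measurableSet_orderCell _)]

lemma volume_unitCube : volume (univ.pi fun _ : ι => Icc (0 : ℝ) 1) = 1 := by
  rw [volume_pi_pi]
  simp [Real.volume_Icc]

lemma measurePreserving_comp_perm (σ : Equiv.Perm ι) :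
    MeasurePreserving (fun x : ι → ℝ => x ∘ σ) volume volume := by
  convert volume_measurePreserving_piCongrLeft (fun _ : ι => ℝ) σ.symm using 1
  ext x i
  simp [MeasurableEquiv.coe_piCongrLeft, Equiv.piCongrLeft_apply_eq_cast]

lemma volume_unitCube_inter_orderCell (τ : Equiv.Perm (Fin m)) :
    volume ((univ.pi fun _ => Icc (0 : ℝ) 1) ∩ orderCell τ) = (m.factorial : ℝ≥0∞)⁻¹ := by
  let C : Set (Fin m → ℝ) := univ.pi fun _ => Icc 0 1
  have hperm : ∀ σ : Equiv.Perm (Fin m), (fun x : Fin m → ℝ => x ∘ σ) ⁻¹' C = C := by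
    intro σ
    ext x
    simp only [C, mem_preimage, mem_univ_pi, comp_apply]
    exact σ.forall_congr_right (q := fun j => x j ∈ Icc (0 : ℝ) 1)
  have hcongr : ∀ σ, volume (C ∩ orderCell σ) = volume (C ∩ orderCell 1) := by
    intro σ
    have hmeas : MeasurableSet (C ∩ orderCell 1) :=
      (MeasurableSet.univ_pi fun _ => measurableSet_Icc).inter (measurableSet_orderCell 1)
    rw [← (measurePreserving_comp_perm σ).measure_preimage hmeas.nullMeasurableSet, preimage_inter,
      hperm, preimage_comp_orderCell, mul_one]
  have hsum : (m.factorial : ℝ≥0∞) * volume (C ∩ orderCell 1) = 1 := by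
    rw [← volume_unitCube (ι := Fin m), volume_eq_sum_inter_orderCell C,
      Finset.sum_congr rfl fun σ _ => hcongr σ, Finset.sum_const, Finset.card_univ,
      Fintype.card_perm, Fintype.card_fin, nsmul_eq_mul]
  rw [hcongr]
  exact ENNReal.eq_inv_of_mul_eq_one_left (by rwa [mul_comm])

end Volume

lemma volume_Ozz_inter_orderCell {m : ℕ} (τ : Equiv.Perm (Fin m)) :
    volume (Ozz m ∩ orderCell τ) = if DownUp τ⁻¹ then (m.factorial : ℝ≥0∞)⁻¹ else 0 := by
  have hmem : ∀ x ∈ orderCell τ, x ∈ Ozz m ↔ x ∈ (univ.pi fun _ => Icc 0 1) ∧ DownUp τ⁻¹ :=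
    fun x hx => and_congr mem_univ_pi.symm (zigzag_iff_downUp_inv hx)
  split_ifs with hτ
  · rw [← volume_unitCube_inter_orderCell τ]
    congr 1
    ext x
    exact ⟨fun ⟨hO, hc⟩ => ⟨((hmem x hc).1 hO).1, hc⟩, fun ⟨hC, hc⟩ => ⟨(hmem x hc).2 ⟨hC, hτ⟩, hc⟩⟩
  · refine measure_mono_null (fun x ⟨hO, hc⟩ => ?_) measure_empty
    exact hτ ((hmem x hc).1 hO).2

lemma card_filter_downUp_inv (m : ℕ) :
    (Finset.univ.filter fun τ : Equiv.Perm (Fin m) => DownUp τ⁻¹).card = eulerNumber m := by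
  rw [eulerNumber, Nat.card_eq_fintype_card, ← Fintype.card_subtype]
  exact Fintype.card_congr ((Equiv.inv _).subtypeEquiv fun _ => Iff.rfl).symm

lemma volume_Ozz (m : ℕ) :
    volume (Ozz m) = (eulerNumber m : ℝ≥0∞) / (m.factorial : ℝ≥0∞) := by
  rw [volume_eq_sum_inter_orderCell, Finset.sum_congr rfl fun τ _ => volume_Ozz_inter_orderCell τ,
    Finset.sum_ite, Finset.sum_const_zero, add_zero, Finset.sum_const, nsmul_eq_mul,
    card_filter_downUp_inv, ENNReal.div_eq_inv_mul, mul_comm]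

section Reflection

variable {ι : Type*}

noncomputable def reflectCoords (s : Set ι) : (ι → ℝ) ≃ᵐ (ι → ℝ) :=
  MeasurableEquiv.piCongrRight fun j =>
    if j ∈ s then MeasurableEquiv.subLeft 1 else MeasurableEquiv.refl ℝ

lemma reflectCoords_apply (s : Set ι) (x : ι → ℝ) (j : ι) :
    reflectCoords s x j = if j ∈ s then 1 - x j else x j := by
  change (if j ∈ s then MeasurableEquiv.subLeft (1 : ℝ) else MeasurableEquiv.refl ℝ) (x j) = _
  split_ifs <;> rfl

lemma measurePreserving_reflectCoords [Fintype ι] (s : Set ι) :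
    MeasurePreserving (reflectCoords s) volume volume := by
  have hcoe : ⇑(reflectCoords s) = fun x j => if j ∈ s then 1 - x j else x j :=
    funext fun x => funext (reflectCoords_apply s x)
  rw [hcoe]
  refine volume_preserving_pi (f := fun j (t : ℝ) => if j ∈ s then 1 - t else t) fun j => ?_
  split_ifs
  exacts [Measure.measurePreserving_sub_left volume 1, .id volume]

end Reflection

lemma reflectCoords_preimage_Pn1 (n : ℕ) :
    reflectCoords {j : Fin (n - 3) | ¬ Even (j : ℕ)} ⁻¹' Pn1 n = Ozz (n - 3) := by
  ext x
  simp only [Pn1, Ozz, mem_preimage, mem_ofPred_eq, reflectCoords_apply]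
  refine and_congr (forall_congr' fun j => ?_) (forall_congr' fun j => forall_congr' fun h => ?_)
  · rw [mem_Icc, mem_Icc]
    split_ifs <;> constructor <;> rintro ⟨_, _⟩ <;> constructor <;> linarith
  · by_cases hj : Even j <;>
      simp only [hj, Nat.even_add_one, not_true_eq_false, not_false_eq_true, if_true, if_false] <;>
      constructor <;> intro <;> linarith

theorem volume_Pn1_general (n : ℕ) :
    volume (Pn1 n) = (eulerNumber (n - 3) : ℝ≥0∞) / (Nat.factorial (n - 3) : ℝ≥0∞) := by
  rw [← (measurePreserving_reflectCoords _).measure_preimage_equiv, reflectCoords_preimage_Pn1,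
    volume_Ozz]

/-- for `n ≥ 4`, the Lebesgue volume of `P_n(1) ⊆ ℝ^{n-3}` is
`E_{n-3} / (n-3)!`. -/
theorem volume_Pn1 (n : ℕ) (hn : 4 ≤ n) :
    volume (Pn1 n) = (eulerNumber (n - 3) : ℝ≥0∞) / (Nat.factorial (n - 3) : ℝ≥0∞) :=
  volume_Pn1_general n
end

section
/- For every n ≥ 1, the sum of τ(1) over all down-up alternating permutations τ of {1,…,n} equals E_{n+1}; equivalently, the average of τ(1) over all down-up alternating permutations of {1,…,n} equals E_{n+1}/E_n. -/
/-!
Removing the first entry `s` of an up-down permutation of `{1,…,n+1}` and standardising the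
remaining entries leaves a down-up permutation `τ` of `{1,…,n}` with `s ≤ τ(1)`, and every such
pair `(s, τ)` arises exactly once. So there are `∑_τ τ(1)` up-down permutations of `{1,…,n+1}`,
and complementation `i ↦ n + 2 - i` shows that there are `E_{n+1}` of them.
-/

open scoped Classical

open Equiv Finset

lemma downUp_revPerm_mul_iff {m : ℕ} (τ : Perm (Fin m)) :
    DownUp (Fin.revPerm * τ) ↔ UpDown τ := by
  refine forall₂_congr fun i h => ?_
  split_ifs <;> simp [Fin.rev_lt_rev]

lemma eulerNumber_eq_card_upDown (m : ℕ) :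
    eulerNumber m = Nat.card {τ : Perm (Fin m) // UpDown τ} :=
  Nat.card_congr ((Equiv.mulLeft Fin.revPerm).subtypeEquiv fun τ =>
    (downUp_revPerm_mul_iff τ).symm).symm

def finConsPerm {n : ℕ} (p : Fin (n + 1) × Perm (Fin n)) : Perm (Fin (n + 1)) :=
  (finSuccEquiv n).trans ((Equiv.optionCongr p.2).trans (finSuccEquiv' p.1).symm)

@[simp] lemma finConsPerm_apply_zero {n : ℕ} (p : Fin (n + 1) × Perm (Fin n)) :
    finConsPerm p 0 = p.1 := by
  simp [finConsPerm]

@[simp] lemma finConsPerm_apply_succ {n : ℕ} (p : Fin (n + 1) × Perm (Fin n)) (i : Fin n) :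
    finConsPerm p i.succ = p.1.succAbove (p.2 i) := by
  simp [finConsPerm]

lemma finConsPerm_apply_mk_succ {n : ℕ} (p : Fin (n + 1) × Perm (Fin n)) (i : ℕ)
    (h : i + 1 < n + 1) : finConsPerm p ⟨i + 1, h⟩ = p.1.succAbove (p.2 ⟨i, by omega⟩) :=
  finConsPerm_apply_succ p ⟨i, _⟩

lemma finConsPerm_bijective (n : ℕ) : Function.Bijective (finConsPerm (n := n)) := by
  refine (Fintype.bijective_iff_injective_and_card _).mpr ⟨fun p q hpq => ?_, ?_⟩
  · have h0 : p.1 = q.1 := by simpa using congr($hpq 0)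
    refine Prod.ext h0 (Equiv.ext fun i => ?_)
    have h := congr($hpq i.succ)
    simp only [finConsPerm_apply_succ, h0] at h
    exact Fin.succAbove_right_injective h
  · simp [Fintype.card_perm, Nat.factorial_succ]

lemma upDown_finConsPerm_iff {n : ℕ} (hn : 0 < n) (p : Fin (n + 1) × Perm (Fin n)) :
    UpDown (finConsPerm p) ↔ p.1 ≤ (p.2 ⟨0, hn⟩).castSucc ∧ DownUp p.2 := by
  rw [UpDown, ← Nat.and_forall_add_one, DownUp]
  refine and_congr ?_ (forall_congr' fun i => ?_)
  · simp [finConsPerm_apply_mk_succ, hn, Fin.lt_succAbove_iff_le_castSucc]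
  · simp only [finConsPerm_apply_mk_succ, Fin.succAbove_lt_succAbove_iff, Nat.even_add_one,
      ite_not, Nat.add_lt_add_iff_right]

lemma card_filter_prod_eq_sum {α β : Type*} [Fintype α] [Fintype β] (P : β → Prop)
    (Q : α → β → Prop) [DecidablePred P] [∀ a b, Decidable (Q a b)] :
    #{p : α × β | Q p.1 p.2 ∧ P p.2} = ∑ b ∈ univ.filter P, #{a | Q a b} := by
  rw [card_filter, Fintype.sum_prod_type_right, sum_filter]
  refine sum_congr rfl fun b _ => ?_
  by_cases hb : P b <;> simp [hb]

/-- for `n ≥ 1`, the sum of `τ(1)` over all down-up alternating permutations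
of `{1,…,n}` equals `E_{n+1}` (so the average is `E_{n+1}/E_n`). -/
theorem sum_first_entry_downup (n : ℕ) (hn : 1 ≤ n) :
    ∑ τ ∈ Finset.univ.filter (fun τ : Equiv.Perm (Fin n) => DownUp τ),
        ((τ ⟨0, hn⟩ : ℕ) + 1) = eulerNumber (n + 1) := by
  calc ∑ τ ∈ univ.filter (fun τ : Perm (Fin n) => DownUp τ), ((τ ⟨0, hn⟩ : ℕ) + 1)
      = ∑ τ ∈ univ.filter (fun τ : Perm (Fin n) => DownUp τ),
          #{s : Fin (n + 1) | s ≤ (τ ⟨0, hn⟩).castSucc} := by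
        simp [filter_ge_eq_Iic, Fin.card_Iic]
    _ = #{p : Fin (n + 1) × Perm (Fin n) | p.1 ≤ (p.2 ⟨0, hn⟩).castSucc ∧ DownUp p.2} :=
        (card_filter_prod_eq_sum (fun τ => DownUp τ) fun s τ => s ≤ (τ ⟨0, hn⟩).castSucc).symm
    _ = Nat.card {p // UpDown (finConsPerm p)} := by
        simp_rw [upDown_finConsPerm_iff hn]
        rw [Nat.card_eq_fintype_card, Fintype.card_subtype]
    _ = Nat.card {σ : Perm (Fin (n + 1)) // UpDown σ} :=
        Nat.card_congr ((Equiv.ofBijective _ (finConsPerm_bijective n)).subtypeEquiv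
          fun _ => Iff.rfl)
    _ = eulerNumber (n + 1) := (eulerNumber_eq_card_upDown _).symm
end

section
/- Let 1 ≤ i ≤ n. If i is odd, then the sum of τ(i) over all down-up alternating permutations τ of {1,…,n} equals e(Z_{n,i}); if i is even, then the sum of τ(i) over all up-down alternating permutations τ of {1,…,n} equals e(Z_{n,i}). Equivalently, the average of τ(i) over down-up alternating permutations (i odd), respectively up-down alternating permutations (i even), of {1,…,n} equals e(Z_{n,i})/E_n. -/
open scoped Classical

/-- The generating (cover) relations of the augmented zigzag poset `Z_{n,i}` on `{0,…,n}`: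
`0 ⪯ i`; for `1 ≤ j < i`, `j ⪯ j+1` iff `i - j` is odd; for `i ≤ j < n`, `j ⪯ j+1` iff
`j - i` is odd. -/
def ZRel (n i : ℕ) (x y : ℕ) : Prop :=
  (x = 0 ∧ y = i) ∨
  (y = x + 1 ∧ 1 ≤ x ∧ x < i ∧ Odd (i - x)) ∨
  (y = x + 1 ∧ i ≤ x ∧ x < n ∧ Odd (x - i)) ∨
  (x = y + 1 ∧ 1 ≤ y ∧ y < i ∧ Even (i - y)) ∨
  (x = y + 1 ∧ i ≤ y ∧ y < n ∧ Even (y - i))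

/-- A linear extension of `Z_{n,i}`: a bijection `σ : {0,…,n} → {0,…,n}` with `σ(a) < σ(b)`
whenever `a ≺ b` in `Z_{n,i}` (equivalently, on the generating relations). -/
def IsLinExtZ (n i : ℕ) (σ : Equiv.Perm (Fin (n + 1))) : Prop :=
  ∀ a b : Fin (n + 1), ZRel n i (a : ℕ) (b : ℕ) → σ a < σ b

/-- `e(Z_{n,i})`, the number of linear extensions of the augmented zigzag poset. -/
noncomputable def eZ (n i : ℕ) : ℕ :=
  Nat.card {σ : Equiv.Perm (Fin (n + 1)) // IsLinExtZ n i σ}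

/-!
Prepending a value `v` to a permutation `τ` of `{1,…,n}` (and shifting the values `≥ v` up)
is a bijection `(v, τ) ↦ σ` onto the permutations of `{0,…,n}`. The cover relations of `Z_{n,i}`
among `1,…,n` form a zigzag with a peak at `i`, so `σ` is a linear extension exactly when `τ` is
alternating with a peak at `i` — down-up for odd `i`, up-down for even `i` — and the remaining
relation `0 ≺ i` says `v ≤ τ(i)`. Each such `τ` therefore contributes `τ(i)` linear extensions.
-/

open Finset

def permCons {n : ℕ} (v : Fin (n + 1)) (τ : Equiv.Perm (Fin n)) : Equiv.Perm (Fin (n + 1)) :=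
  (finSuccEquiv n).trans ((Equiv.optionCongr τ).trans (finSuccEquiv' v).symm)

section permCons

variable {n : ℕ} (v : Fin (n + 1)) (τ : Equiv.Perm (Fin n))

@[simp]
lemma permCons_zero : permCons v τ 0 = v := by
  simp [permCons]

@[simp]
lemma permCons_succ (j : Fin n) : permCons v τ j.succ = v.succAbove (τ j) := by
  simp [permCons]

lemma permCons_succ_lt_succ_iff (a b : Fin n) :
    permCons v τ a.succ < permCons v τ b.succ ↔ τ a < τ b := by
  simp [Fin.succAbove_lt_succAbove_iff]

lemma permCons_zero_lt_succ_iff (b : Fin n) :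
    permCons v τ 0 < permCons v τ b.succ ↔ v ≤ (τ b).castSucc := by
  simp [Fin.lt_succAbove_iff_le_castSucc]

end permCons

lemma permCons_injective (n : ℕ) :
    Function.Injective fun p : Fin (n + 1) × Equiv.Perm (Fin n) => permCons p.1 p.2 := by
  rintro ⟨v, τ⟩ ⟨v', τ'⟩ h
  have hv : v = v' := by simpa using DFunLike.congr_fun h 0
  subst hv
  have hτ : τ = τ' := Equiv.ext fun j => by simpa using DFunLike.congr_fun h j.succ
  rw [hτ]

lemma permCons_bijective (n : ℕ) :
    Function.Bijective fun p : Fin (n + 1) × Equiv.Perm (Fin n) => permCons p.1 p.2 :=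
  (Fintype.bijective_iff_injective_and_card _).mpr ⟨permCons_injective n, by
    simp [Fintype.card_perm, Nat.factorial_succ]⟩

section ZRel

variable {n i : ℕ}

lemma zRel_zero_left_iff (hi : 1 ≤ i) (b : ℕ) : ZRel n i 0 b ↔ b = i := by
  simp only [ZRel, Nat.odd_iff, Nat.even_iff, true_and]
  omega

lemma not_zRel_succ_zero (hi : 1 ≤ i) (a : ℕ) : ¬ ZRel n i (a + 1) 0 := by
  simp only [ZRel]; omega

lemma zRel_succ_succ_iff (hin : i ≤ n) (a b : ℕ) :
    ZRel n i (a + 1) (b + 1) ↔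
      (b = a + 1 ∧ b < n ∧ Even (i + a)) ∨ (a = b + 1 ∧ a < n ∧ ¬ Even (i + b)) := by
  simp only [ZRel, Nat.odd_iff, Nat.even_iff]
  constructor <;> intro h <;> omega

end ZRel

/-- Entry `k + 1` of `τ` sits at `⟨k, _⟩`. The pattern ascends into entry `i` and descends out
of it, like the cover relations of `Z_{n,i}` on `{1,…,n}`. -/
def AlternatingPeakAt {n : ℕ} (i : ℕ) (τ : Equiv.Perm (Fin n)) : Prop :=
  ∀ k : ℕ, ∀ h : k + 1 < n,
    if Even (i + k) then τ ⟨k, Nat.lt_of_succ_lt h⟩ < τ ⟨k + 1, h⟩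
    else τ ⟨k + 1, h⟩ < τ ⟨k, Nat.lt_of_succ_lt h⟩

lemma alternatingPeakAt_iff_downUp {n i : ℕ} (hi : Odd i) (τ : Equiv.Perm (Fin n)) :
    AlternatingPeakAt i τ ↔ DownUp τ := by
  have hi' : ¬ Even i := Nat.not_even_iff_odd.mpr hi
  refine forall₂_congr fun k _ => ?_
  by_cases hk : Even k <;> simp [Nat.even_add, hi', hk]

lemma alternatingPeakAt_iff_upDown {n i : ℕ} (hi : Even i) (τ : Equiv.Perm (Fin n)) :
    AlternatingPeakAt i τ ↔ UpDown τ := by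
  refine forall₂_congr fun k _ => ?_
  by_cases hk : Even k <;> simp [Nat.even_add, hi, hk]

lemma isLinExtZ_permCons_iff {n i : ℕ} (hi1 : 1 ≤ i) (hin : i ≤ n) (v : Fin (n + 1))
    (τ : Equiv.Perm (Fin n)) :
    IsLinExtZ n i (permCons v τ) ↔
      AlternatingPeakAt i τ ∧ v ≤ (τ ⟨i - 1, Nat.sub_one_lt_of_le hi1 hin⟩).castSucc := by
  have hpeak : ∀ b : Fin (n + 1), (b : ℕ) = i ↔ b = Fin.succ ⟨i - 1, by omega⟩ := fun b => by
    simp only [Fin.ext_iff, Fin.val_succ]; omega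
  constructor
  · intro h
    refine ⟨fun k hk => ?_, ?_⟩
    · split_ifs with hik
      · have := h (Fin.succ ⟨k, by omega⟩) (Fin.succ ⟨k + 1, hk⟩)
          ((zRel_succ_succ_iff hin _ _).mpr (Or.inl ⟨rfl, hk, hik⟩))
        rwa [permCons_succ_lt_succ_iff] at this
      · have := h (Fin.succ ⟨k + 1, hk⟩) (Fin.succ ⟨k, by omega⟩)
          ((zRel_succ_succ_iff hin _ _).mpr (Or.inr ⟨rfl, hk, hik⟩))
        rwa [permCons_succ_lt_succ_iff] at this
    · have := h 0 _ ((zRel_zero_left_iff hi1 _).mpr ((hpeak _).mpr rfl))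
      rwa [permCons_zero_lt_succ_iff] at this
  · rintro ⟨halt, hv⟩ a b hab
    induction a using Fin.cases with
    | zero =>
      rw [(hpeak b).mp ((zRel_zero_left_iff hi1 _).mp hab), permCons_zero_lt_succ_iff]
      exact hv
    | succ a =>
      induction b using Fin.cases with
      | zero => exact absurd hab (not_zRel_succ_zero hi1 _)
      | succ b =>
        obtain ⟨a, ha⟩ := a
        obtain ⟨b, hb⟩ := b
        rw [permCons_succ_lt_succ_iff]
        rcases (zRel_succ_succ_iff hin a b).mp hab with ⟨rfl, hb, hia⟩ | ⟨rfl, ha, hib⟩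
        · simpa [hia] using halt a hb
        · simpa [hib] using halt b ha

lemma sum_entry_add_one_eq_eZ {n i : ℕ} (hi1 : 1 ≤ i) (hin : i ≤ n) :
    ∑ τ ∈ univ.filter (fun τ : Equiv.Perm (Fin n) => AlternatingPeakAt i τ),
        ((τ ⟨i - 1, Nat.sub_one_lt_of_le hi1 hin⟩ : ℕ) + 1) = eZ n i := by
  let peak (τ : Equiv.Perm (Fin n)) : Fin (n + 1) := (τ ⟨i - 1, by omega⟩).castSucc
  calc _ = #((univ.filter fun τ => AlternatingPeakAt i τ).sigma fun τ => Iic (peak τ)) := by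
        simp [card_sigma, peak]
    _ = #(univ.filter fun σ => IsLinExtZ n i σ) := by
        refine card_bij (fun p _ => permCons p.2 p.1) (fun ⟨τ, v⟩ hp => ?_)
          (fun ⟨τ, v⟩ _ ⟨τ', v'⟩ _ h => ?_) (fun σ hσ => ?_)
        · simp only [mem_sigma, mem_filter, mem_univ, true_and, mem_Iic] at hp ⊢
          exact (isLinExtZ_permCons_iff hi1 hin v τ).mpr hp
        · obtain ⟨rfl, rfl⟩ :=
            Prod.ext_iff.mp (permCons_injective n (a₁ := (v, τ)) (a₂ := (v', τ')) h)
          rfl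
        · obtain ⟨⟨v, τ⟩, rfl⟩ := (permCons_bijective n).2 σ
          simp only [mem_filter, mem_univ, true_and] at hσ
          exact ⟨⟨τ, v⟩, by simpa [peak] using (isLinExtZ_permCons_iff hi1 hin v τ).mp hσ, rfl⟩
    _ = eZ n i := by
        rw [eZ, Nat.card_eq_fintype_card, Fintype.card_subtype]

/-- for `1 ≤ i ≤ n`, the sum of `τ(i)` over all down-up (if `i` odd), resp.
up-down (if `i` even), alternating permutations of `{1,…,n}` equals `e(Z_{n,i})` (so the
corresponding average is `e(Z_{n,i})/E_n`). -/
theorem sum_ith_entry_eq_eZ (n i : ℕ) (hi1 : 1 ≤ i) (hin : i ≤ n) :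
    (Odd i →
      ∑ τ ∈ Finset.univ.filter (fun τ : Equiv.Perm (Fin n) => DownUp τ),
          ((τ ⟨i - 1, by omega⟩ : ℕ) + 1) = eZ n i) ∧
    (Even i →
      ∑ τ ∈ Finset.univ.filter (fun τ : Equiv.Perm (Fin n) => UpDown τ),
          ((τ ⟨i - 1, by omega⟩ : ℕ) + 1) = eZ n i) := by
  have h := sum_entry_add_one_eq_eZ hi1 hin
  refine ⟨fun hi => ?_, fun hi => ?_⟩
  · rwa [filter_congr fun τ _ => alternatingPeakAt_iff_downUp hi τ] at h
  · rwa [filter_congr fun τ _ => alternatingPeakAt_iff_upDown hi τ] at h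
end
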